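/- Let E and F be Banach spaces over 𝕂, let 0 < p < ∞, let a ∈ E, and let f : E → F be an arbitrary mapping. Then f is absolutely p-summing at a, i.e. there is C ≥ 0 such that ∑_{j=1}^m ‖f(a + x_j) − f(a)‖^p ≤ C · sup_{φ ∈ B_{E'}} ∑_{j=1}^m |φ(x_j)|^p for all m ∈ ℕ and x₁,…,x_m ∈ E, if and only if there is C' ≥ 0 such that the weighted inequality ∑_{j=1}^m |b_j| · ‖f(a + x_j) − f(a)‖^p ≤ C' · sup_{φ ∈ B_{E'}} ∑_{j=1}^m |b_j| · |φ(x_j)|^p holds for every m ∈ ℕ, every x₁,…,x_m ∈ E and all scalars b₁,…,b_m. -/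

import Mathlib

open MeasureTheory

/-- The closed unit ball of the dual of `E`, equipped with the weak-star topology. -/
noncomputable def dualBall (𝕜 E : Type*) [RCLike 𝕜] [NormedAddCommGroup E]
    [NormedSpace 𝕜 E] : Set (WeakDual 𝕜 E) :=
  {φ | ‖WeakDual.toStrongDual φ‖ ≤ 1}

section Aux

variable {𝕜 E : Type*} [RCLike 𝕜] [NormedAddCommGroup E] [NormedSpace 𝕜 E]

instance : Nonempty (dualBall 𝕜 E) :=
  ⟨⟨0, by simp [dualBall]⟩⟩

lemma dualBall.apply_le (φ : dualBall 𝕜 E) (x : E) :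
    ‖(φ : WeakDual 𝕜 E) x‖ ≤ ‖x‖ := by
  have h := (WeakDual.toStrongDual (φ : WeakDual 𝕜 E)).le_opNorm x
  have h2 : ‖WeakDual.toStrongDual (φ : WeakDual 𝕜 E)‖ ≤ 1 := φ.2
  calc ‖(φ : WeakDual 𝕜 E) x‖ = ‖WeakDual.toStrongDual (φ : WeakDual 𝕜 E) x‖ := rfl
    _ ≤ ‖WeakDual.toStrongDual (φ : WeakDual 𝕜 E)‖ * ‖x‖ := h
    _ ≤ 1 * ‖x‖ := by
        exact mul_le_mul_of_nonneg_right h2 (norm_nonneg x)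
    _ = ‖x‖ := one_mul _

lemma dualBall.rpow_apply_le (p : ℝ) (hp : 0 ≤ p) (φ : dualBall 𝕜 E) (x : E) :
    ‖(φ : WeakDual 𝕜 E) x‖ ^ p ≤ ‖x‖ ^ p :=
  Real.rpow_le_rpow (norm_nonneg _) (dualBall.apply_le φ x) hp

lemma dualBall.bddAbove {m : ℕ} (p : ℝ) (hp : 0 ≤ p) (x : Fin m → E) (w : Fin m → ℝ)
    (hw : ∀ j, 0 ≤ w j) :
    BddAbove (Set.range fun φ : dualBall 𝕜 E =>
      ∑ j, w j * ‖(φ : WeakDual 𝕜 E) (x j)‖ ^ p) := by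
  refine ⟨∑ j, w j * ‖x j‖ ^ p, ?_⟩
  rintro _ ⟨φ, rfl⟩
  exact Finset.sum_le_sum fun j _ =>
    mul_le_mul_of_nonneg_left (dualBall.rpow_apply_le p hp φ (x j)) (hw j)

end Aux

/-- The Mendel–Schechtman rational-approximation/repetition argument: an arbitrary mapping
`f : E → F` is absolutely `p`-summing at `a ∈ E` if and only if it satisfies the
corresponding weighted summing inequality with arbitrary scalar weights. -/
theorem absolutely_summing_iff_weighted
    {𝕜 E F : Type*} [RCLike 𝕜]
    [NormedAddCommGroup E] [NormedSpace 𝕜 E] [CompleteSpace E]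
    [NormedAddCommGroup F] [NormedSpace 𝕜 F] [CompleteSpace F]
    (p : ℝ) (hp : 0 < p) (a : E) (f : E → F) :
    (∃ C ≥ 0, ∀ (m : ℕ) (x : Fin m → E),
        ∑ j, ‖f (a + x j) - f a‖ ^ p ≤
          C * ⨆ φ : dualBall 𝕜 E, ∑ j, ‖(φ : WeakDual 𝕜 E) (x j)‖ ^ p) ↔
    (∃ C' ≥ 0, ∀ (m : ℕ) (x : Fin m → E) (b : Fin m → 𝕜),
        ∑ j, ‖b j‖ * ‖f (a + x j) - f a‖ ^ p ≤
          C' * ⨆ φ : dualBall 𝕜 E, ∑ j, ‖b j‖ * ‖(φ : WeakDual 𝕜 E) (x j)‖ ^ p) := by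
  have hp0 : (0:ℝ) ≤ p := hp.le
  constructor
  · rintro ⟨C, hC0, hC⟩
    refine ⟨C, hC0, fun m x b => ?_⟩
    set L : Fin m → ℝ := fun j => ‖f (a + x j) - f a‖ ^ p with hL
    set w : Fin m → ℝ := fun j => ‖b j‖ with hwdef
    have hw : ∀ j, 0 ≤ w j := fun j => norm_nonneg _
    have hL0 : ∀ j, 0 ≤ L j := fun j => Real.rpow_nonneg (norm_nonneg _) p
    set S : ℝ := ⨆ φ : dualBall 𝕜 E, ∑ j, w j * ‖(φ : WeakDual 𝕜 E) (x j)‖ ^ p with hS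
    -- repetition lemma: the inequality holds for natural number weights
    have rep : ∀ k : Fin m → ℕ, ∑ j, (k j : ℝ) * L j ≤
        C * ⨆ φ : dualBall 𝕜 E, ∑ j, (k j : ℝ) * ‖(φ : WeakDual 𝕜 E) (x j)‖ ^ p := by
      intro k
      set ι := (Σ j : Fin m, Fin (k j)) with hι
      set e : ι ≃ Fin (Fintype.card ι) := Fintype.equivFin ι with he
      have key := hC (Fintype.card ι) (fun i => x ((e.symm i).1))
      have hsum : ∀ g : Fin m → ℝ,
          ∑ i : Fin (Fintype.card ι), g ((e.symm i).1) = ∑ j, (k j : ℝ) * g j := by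
        intro g
        rw [← e.sum_comp (fun i => g ((e.symm i).1))]
        simp only [Equiv.symm_apply_apply]
        rw [← Finset.univ_sigma_univ, Finset.sum_sigma]
        simp [mul_comm]
      calc ∑ j, (k j : ℝ) * L j
          = ∑ i : Fin (Fintype.card ι), ‖f (a + x ((e.symm i).1)) - f a‖ ^ p := by
            rw [hsum L]
        _ ≤ C * ⨆ φ : dualBall 𝕜 E,
              ∑ i : Fin (Fintype.card ι), ‖(φ : WeakDual 𝕜 E) (x ((e.symm i).1))‖ ^ p := key
        _ = C * ⨆ φ : dualBall 𝕜 E, ∑ j, (k j : ℝ) * ‖(φ : WeakDual 𝕜 E) (x j)‖ ^ p := by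
            congr 1
            exact congrArg iSup (funext fun φ => hsum fun j => ‖(φ : WeakDual 𝕜 E) (x j)‖ ^ p)
    -- now the approximation argument
    refine le_of_forall_pos_le_add fun ε hε => ?_
    set M : ℝ := ∑ j, ‖x j‖ ^ p with hM
    have hM0 : 0 ≤ M := Finset.sum_nonneg fun j _ => Real.rpow_nonneg (norm_nonneg _) p
    obtain ⟨N, hN⟩ := exists_nat_gt (C * M / ε)
    have hNpos : (0:ℝ) < N :=
      lt_of_le_of_lt (div_nonneg (mul_nonneg hC0 hM0) hε.le) hN
    set k : Fin m → ℕ := fun j => ⌈w j * N⌉₊ with hk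
    have hk_ge : ∀ j, w j * N ≤ (k j : ℝ) := fun j => Nat.le_ceil _
    have hk_le : ∀ j, (k j : ℝ) ≤ w j * N + 1 := fun j =>
      (Nat.ceil_lt_add_one (mul_nonneg (hw j) hNpos.le)).le
    have hBdd := dualBall.bddAbove (𝕜 := 𝕜) p hp0 x w hw
    -- bound on the sup with weights k
    have sup_bound : (⨆ φ : dualBall 𝕜 E, ∑ j, (k j : ℝ) * ‖(φ : WeakDual 𝕜 E) (x j)‖ ^ p)
        ≤ N * S + M := by
      refine ciSup_le fun φ => ?_
      have h1 : ∑ j, (k j : ℝ) * ‖(φ : WeakDual 𝕜 E) (x j)‖ ^ p ≤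
          ∑ j, (w j * N + 1) * ‖(φ : WeakDual 𝕜 E) (x j)‖ ^ p :=
        Finset.sum_le_sum fun j _ =>
          mul_le_mul_of_nonneg_right (hk_le j) (Real.rpow_nonneg (norm_nonneg _) p)
      have h2 : ∑ j, (w j * N + 1) * ‖(φ : WeakDual 𝕜 E) (x j)‖ ^ p =
          N * ∑ j, w j * ‖(φ : WeakDual 𝕜 E) (x j)‖ ^ p +
            ∑ j, ‖(φ : WeakDual 𝕜 E) (x j)‖ ^ p := by
        rw [Finset.mul_sum, ← Finset.sum_add_distrib]
        congr 1; funext j; ring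
      have h3 : ∑ j, w j * ‖(φ : WeakDual 𝕜 E) (x j)‖ ^ p ≤ S :=
        le_ciSup hBdd φ
      have h4 : ∑ j, ‖(φ : WeakDual 𝕜 E) (x j)‖ ^ p ≤ M :=
        Finset.sum_le_sum fun j _ => dualBall.rpow_apply_le p hp0 φ (x j)
      calc ∑ j, (k j : ℝ) * ‖(φ : WeakDual 𝕜 E) (x j)‖ ^ p
          ≤ N * ∑ j, w j * ‖(φ : WeakDual 𝕜 E) (x j)‖ ^ p +
            ∑ j, ‖(φ : WeakDual 𝕜 E) (x j)‖ ^ p := h1.trans_eq h2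
        _ ≤ N * S + M := add_le_add (mul_le_mul_of_nonneg_left h3 hNpos.le) h4
    have main : ∑ j, w j * L j ≤ C * S + C * M / N := by
      have step1 : ∑ j, w j * L j ≤ (1 / N) * ∑ j, (k j : ℝ) * L j := by
        rw [Finset.mul_sum]
        refine Finset.sum_le_sum fun j _ => ?_
        rw [← mul_assoc]
        refine mul_le_mul_of_nonneg_right ?_ (hL0 j)
        rw [one_div, inv_mul_eq_div, le_div_iff₀ hNpos]
        exact hk_ge j
      calc ∑ j, w j * L j ≤ (1 / N) * ∑ j, (k j : ℝ) * L j := step1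
        _ ≤ (1 / N) * (C * (N * S + M)) := by
            refine mul_le_mul_of_nonneg_left ?_ (by positivity)
            exact (rep k).trans (mul_le_mul_of_nonneg_left sup_bound hC0)
        _ = C * S + C * M / N := by field_simp
    have hlast : C * M / N < ε := by
      rw [div_lt_iff₀ hNpos]
      calc C * M ≤ (C * M / ε) * ε := by rw [div_mul_cancel₀]; exact hε.ne'
        _ < N * ε := by exact mul_lt_mul_of_pos_right hN hε
        _ = ε * N := mul_comm _ _
    exact main.trans (by linarith)
  · rintro ⟨C', hC0, hC⟩
    refine ⟨C', hC0, fun m x => ?_⟩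
    have := hC m x (fun _ => 1)
    simpa using this
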